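/- arXiv:1307.6194 — 5 statements merged into one kernel-verified Lean document; each statement's English description precedes it below -/
import Mathlib

section
/- Multiplicative embedding X^r_{s,b} · X^r_{s−1,0} ↪ X^r_{s−1,0} in dimension n = 2, stated on the Fourier side: let 1<r≤2, b>1/r and s>1+1/r. Then there is a constant C such that for all measurable F, G : ℝ×ℝ² → [0,∞], ‖⟨ξ⟩^{s−1} (F∗G)(τ,ξ)‖_{L^{r'}(ℝ×ℝ², dτ dξ)} ≤ C ‖⟨ξ⟩^s ⟨|τ|−|ξ|⟩^b F(τ,ξ)‖_{L^{r'}} ‖⟨ξ⟩^{s−1} G(τ,ξ)‖_{L^{r'}}. -/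
/-!
Put `Φ = ⟨ξ⟩^s ⟨|τ|-|ξ|⟩^b F` and `Ψ = ⟨ξ⟩^{s-1} G`. Then
`⟨ξ⟩^{s-1} (F∗G)(τ,ξ) = ∫ k((τ,ξ),(α,η)) Φ(α,η) Ψ(τ-α,ξ-η)` with
`k = ⟨ξ⟩^{s-1} / (⟨η⟩^s ⟨|α|-|η|⟩^b ⟨ξ-η⟩^{s-1})`. Hölder's inequality in `(α,η)` with exponents
`r, r'`, followed by Tonelli and translation invariance, bounds the left side by
`sup ‖k(p,·)‖_{L^r} ‖Φ‖_{L^{r'}} ‖Ψ‖_{L^{r'}}`. Since `⟨ξ⟩ ≤ 2 max(⟨η⟩, ⟨ξ-η⟩)` and `s ≥ 1`,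
`k^r ≤ 2^{(s-1)r} (⟨η⟩^{-sr} + ⟨ξ-η⟩^{-sr}) ⟨|α|-|η|⟩^{-br}`. The `α`-integral is bounded
uniformly in `η` because `br > 1`, and the `η`-integral uniformly in `ξ` because `sr > 2`.
-/

open MeasureTheory ENNReal NNReal

namespace MeasureTheory

variable {E : Type*} [MeasurableSpace E] [AddGroup E] [MeasurableAdd E] [MeasurableSub₂ E]
  {μ : Measure E} [SFinite μ] [μ.IsAddRightInvariant]

theorem lintegral_lintegral_mul_sub {f g : E → ℝ≥0∞} (hf : Measurable f) (hg : Measurable g) :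
    ∫⁻ p, ∫⁻ q, f q * g (p - q) ∂μ ∂μ = (∫⁻ p, f p ∂μ) * ∫⁻ p, g p ∂μ := by
  rw [lintegral_lintegral_swap (by fun_prop)]
  calc ∫⁻ q, ∫⁻ p, f q * g (p - q) ∂μ ∂μ = ∫⁻ q, f q * ∫⁻ p, g p ∂μ ∂μ :=
        lintegral_congr fun q => by
          rw [lintegral_const_mul _ (by fun_prop), lintegral_sub_right_eq_self g q]
    _ = _ := lintegral_mul_const _ hf

theorem lintegral_lintegral_kernel_mul_sub_rpow_le {r r' : ℝ} (hrr' : r.HolderConjugate r')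
    {k : E → E → ℝ≥0∞} (hk : ∀ p, AEMeasurable (k p) μ) {K : ℝ≥0∞}
    (hK : ∀ p, ∫⁻ q, k p q ^ r ∂μ ≤ K) {Φ Ψ : E → ℝ≥0∞} (hΦ : Measurable Φ)
    (hΨ : Measurable Ψ) :
    (∫⁻ p, (∫⁻ q, k p q * (Φ q * Ψ (p - q)) ∂μ) ^ r' ∂μ) ^ (1 / r') ≤
      K ^ (1 / r) * (∫⁻ p, Φ p ^ r' ∂μ) ^ (1 / r') * (∫⁻ p, Ψ p ^ r' ∂μ) ^ (1 / r') := by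
  have hr' : 0 < r' := hrr'.symm.pos
  have holder : ∀ p, ∫⁻ q, k p q * (Φ q * Ψ (p - q)) ∂μ ≤
      K ^ (1 / r) * (∫⁻ q, Φ q ^ r' * Ψ (p - q) ^ r' ∂μ) ^ (1 / r') := fun p => calc
    _ ≤ (∫⁻ q, k p q ^ r ∂μ) ^ (1 / r) * (∫⁻ q, (Φ q * Ψ (p - q)) ^ r' ∂μ) ^ (1 / r') :=
        lintegral_mul_le_Lp_mul_Lq μ hrr' (hk p) (by fun_prop)
    _ ≤ _ := by
        simp_rw [mul_rpow_of_nonneg _ _ hr'.le]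
        gcongr
        · exact hrr'.one_div_nonneg
        · exact hK p
  calc _ ≤ (∫⁻ p, (K ^ (1 / r) * (∫⁻ q, Φ q ^ r' * Ψ (p - q) ^ r' ∂μ) ^ (1 / r')) ^ r' ∂μ)
        ^ (1 / r') := by gcongr with p; exact holder p
    _ = K ^ (1 / r) * (∫⁻ p, ∫⁻ q, Φ q ^ r' * Ψ (p - q) ^ r' ∂μ ∂μ) ^ (1 / r') := by
        simp_rw [mul_rpow_of_nonneg _ _ hr'.le, ← ENNReal.rpow_mul, one_div_mul_cancel hr'.ne',
          ENNReal.rpow_one]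
        rw [lintegral_const_mul _ (Measurable.lintegral_prod_right (by fun_prop)),
          mul_rpow_of_nonneg _ _ (by positivity), ← ENNReal.rpow_mul, mul_assoc,
          mul_one_div_cancel hr'.ne', mul_one]
    _ = _ := by
        rw [lintegral_lintegral_mul_sub (f := fun q => Φ q ^ r') (g := fun q => Ψ q ^ r')
          (by fun_prop) (by fun_prop),
          mul_rpow_of_nonneg _ _ (by positivity), mul_assoc]

theorem lintegral_weighted_convolution_rpow_le {r r' : ℝ} (hrr' : r.HolderConjugate r')
    {w₀ w₁ w₂ : E → ℝ≥0∞} (hw₁ : Measurable w₁) (hw₂ : Measurable w₂)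
    (hw₁_ne_zero : ∀ x, w₁ x ≠ 0) (hw₁_ne_top : ∀ x, w₁ x ≠ ∞)
    (hw₂_ne_zero : ∀ x, w₂ x ≠ 0) (hw₂_ne_top : ∀ x, w₂ x ≠ ∞) {K : ℝ≥0∞}
    (hK : ∀ p, ∫⁻ q, (w₀ p / (w₁ q * w₂ (p - q))) ^ r ∂μ ≤ K) {F G : E → ℝ≥0∞}
    (hF : Measurable F) (hG : Measurable G) :
    (∫⁻ p, (w₀ p * ∫⁻ q, F q * G (p - q) ∂μ) ^ r' ∂μ) ^ (1 / r') ≤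
      K ^ (1 / r) * (∫⁻ p, (w₁ p * F p) ^ r' ∂μ) ^ (1 / r') *
        (∫⁻ p, (w₂ p * G p) ^ r' ∂μ) ^ (1 / r') := by
  have hsplit : ∀ p, w₀ p * ∫⁻ q, F q * G (p - q) ∂μ =
      ∫⁻ q, w₀ p / (w₁ q * w₂ (p - q)) * (w₁ q * F q * (w₂ (p - q) * G (p - q))) ∂μ := by
    intro p
    rw [← lintegral_const_mul _ (by fun_prop)]
    refine lintegral_congr fun q => ?_
    calc w₀ p * (F q * G (p - q))
        = w₀ p * (F q * G (p - q)) * ((w₁ q * w₂ (p - q))⁻¹ * (w₁ q * w₂ (p - q))) := by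
          rw [ENNReal.inv_mul_cancel (mul_ne_zero (hw₁_ne_zero q) (hw₂_ne_zero _))
            (mul_ne_top (hw₁_ne_top q) (hw₂_ne_top _)), mul_one]
      _ = _ := by rw [div_eq_mul_inv]; ring
  simp_rw [hsplit]
  exact lintegral_lintegral_kernel_mul_sub_rpow_le hrr' (fun p => by fun_prop) hK
    (hw₁.mul hF) (hw₂.mul hG)

end MeasureTheory

theorem one_add_rpow_div_le_of_le_add {u v w c a : ℝ} (hc : 0 ≤ c) (hca : c ≤ a) (hu : 0 ≤ u)
    (hv : 0 ≤ v) (hw : 0 ≤ w) (huvw : u ≤ v + w) :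
    (1 + u) ^ c / ((1 + v) ^ a * (1 + w) ^ c) ≤ 2 ^ c * ((1 + v) ^ (-a) + (1 + w) ^ (-a)) := by
  have hv' : 0 < 1 + v := by linarith
  have hw' : 0 < 1 + w := by linarith
  rw [div_le_iff₀ (by positivity)]
  rcases le_total v w with hvw | hwv
  · calc (1 + u) ^ c ≤ (2 * (1 + w)) ^ c := by gcongr; linarith
      _ = 2 ^ c * ((1 + v) ^ (-a) * (1 + v) ^ a) * (1 + w) ^ c := by
        rw [Real.rpow_neg hv'.le, inv_mul_cancel₀ (by positivity),
          Real.mul_rpow (by norm_num) hw'.le, mul_one]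
      _ = 2 ^ c * (1 + v) ^ (-a) * ((1 + v) ^ a * (1 + w) ^ c) := by ring
      _ ≤ _ := by
        gcongr
        exact le_add_of_nonneg_right (by positivity)
  · calc (1 + u) ^ c ≤ (2 * (1 + v)) ^ c := by gcongr; linarith
      _ = 2 ^ c * ((1 + v) ^ (c - a) * (1 + v) ^ a) := by
        rw [← Real.rpow_add hv', sub_add_cancel, Real.mul_rpow (by norm_num) hv'.le]
      _ ≤ 2 ^ c * ((1 + w) ^ (c - a) * (1 + v) ^ a) := by
        have := Real.rpow_le_rpow_of_nonpos hw' (by linarith : 1 + w ≤ 1 + v)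
          (by linarith : c - a ≤ 0)
        gcongr ?_ * (?_ * _)
      _ = 2 ^ c * (1 + w) ^ (-a) * ((1 + v) ^ a * (1 + w) ^ c) := by
        rw [sub_eq_neg_add, Real.rpow_add hw']; ring
      _ ≤ _ := by
        gcongr
        exact le_add_of_nonneg_left (by positivity)

theorem one_add_abs_abs_sub_rpow_neg_le (e α ρ : ℝ) :
    (1 + |(|α|) - ρ|) ^ (-e) ≤ (1 + |α - ρ|) ^ (-e) + (1 + |α + ρ|) ^ (-e) := by
  rcases abs_choice α with h | h <;> rw [h]
  · exact le_add_of_nonneg_right (by positivity)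
  · rw [show -α - ρ = -(α + ρ) by ring, abs_neg]
    exact le_add_of_nonneg_left (by positivity)

theorem lintegral_one_add_abs_abs_sub_rpow_neg_le (e ρ : ℝ) :
    ∫⁻ α : ℝ, ENNReal.ofReal ((1 + |(|α|) - ρ|) ^ (-e)) ≤
      2 * ∫⁻ α : ℝ, ENNReal.ofReal ((1 + |α|) ^ (-e)) := by
  set f : ℝ → ℝ≥0∞ := fun α => ENNReal.ofReal ((1 + |α|) ^ (-e))
  calc _ ≤ ∫⁻ α, (f (α - ρ) + f (α + ρ)) :=
        lintegral_mono fun α =>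
          (ENNReal.ofReal_le_ofReal (one_add_abs_abs_sub_rpow_neg_le e α ρ)).trans ofReal_add_le
    _ = 2 * ∫⁻ α, f α := by
        rw [lintegral_add_left (by fun_prop), lintegral_sub_right_eq_self f,
          lintegral_add_right_eq_self f, two_mul]

theorem lintegral_one_add_norm_rpow_neg_add_sub {E : Type*} [NormedAddCommGroup E]
    [MeasurableSpace E] [BorelSpace E] (μ : Measure E) [μ.IsAddRightInvariant] (a : ℝ) (ξ : E) :
    ∫⁻ η, (ENNReal.ofReal ((1 + ‖η‖) ^ (-a)) + ENNReal.ofReal ((1 + ‖ξ - η‖) ^ (-a))) ∂μ =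
      2 * ∫⁻ η, ENNReal.ofReal ((1 + ‖η‖) ^ (-a)) ∂μ := by
  set f : E → ℝ≥0∞ := fun η => ENNReal.ofReal ((1 + ‖η‖) ^ (-a))
  simp_rw [norm_sub_rev ξ]
  rw [lintegral_add_left (by fun_prop), lintegral_sub_right_eq_self f, two_mul]

theorem one_add_rpow_div_rpow_le_of_le_add {r s b u v w l : ℝ} (hr : 0 ≤ r) (hs : 1 ≤ s)
    (hu : 0 ≤ u) (hv : 0 ≤ v) (hw : 0 ≤ w) (hl : 0 ≤ l) (huvw : u ≤ v + w) :
    ((1 + u) ^ (s - 1) / ((1 + v) ^ s * (1 + l) ^ b * (1 + w) ^ (s - 1))) ^ r ≤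
      2 ^ ((s - 1) * r) * ((1 + v) ^ (-(s * r)) + (1 + w) ^ (-(s * r))) *
        (1 + l) ^ (-(b * r)) := by
  have hpow : ∀ {x : ℝ}, 0 ≤ x → ∀ y, ((1 + x) ^ y) ^ r = (1 + x) ^ (y * r) := fun hx y =>
    (Real.rpow_mul (by linarith) y r).symm
  calc _ = (1 + u) ^ ((s - 1) * r) / ((1 + v) ^ (s * r) * (1 + w) ^ ((s - 1) * r)) *
        (1 + l) ^ (-(b * r)) := by
        rw [Real.div_rpow (by positivity) (by positivity),
          Real.mul_rpow (by positivity) (by positivity),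
          Real.mul_rpow (by positivity) (by positivity), hpow hu, hpow hv, hpow hw, hpow hl,
          Real.rpow_neg (by positivity)]
        ring
    _ ≤ _ := by
        gcongr
        exact one_add_rpow_div_le_of_le_add (by nlinarith) (by nlinarith) hu hv hw huvw

theorem lintegral_wave_kernel_rpow_le {E : Type*} [NormedAddCommGroup E] [MeasurableSpace E]
    [BorelSpace E] (μ : Measure E) [SFinite μ] [μ.IsAddRightInvariant] {r s b : ℝ} (hr : 0 ≤ r)
    (hs : 1 ≤ s) (ξ : E) :
    ∫⁻ q : ℝ × E, (ENNReal.ofReal ((1 + ‖ξ‖) ^ (s - 1)) /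
        (ENNReal.ofReal ((1 + ‖q.2‖) ^ s) * ENNReal.ofReal ((1 + |(|q.1|) - ‖q.2‖|) ^ b) *
          ENNReal.ofReal ((1 + ‖ξ - q.2‖) ^ (s - 1)))) ^ r ∂(volume.prod μ) ≤
      ENNReal.ofReal (2 ^ ((s - 1) * r)) *
        (2 * ∫⁻ η, ENNReal.ofReal ((1 + ‖η‖) ^ (-(s * r))) ∂μ) *
        (2 * ∫⁻ α : ℝ, ENNReal.ofReal ((1 + |α|) ^ (-(b * r)))) := by
  set A : E → ℝ≥0∞ := fun η => ENNReal.ofReal (2 ^ ((s - 1) * r)) *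
    (ENNReal.ofReal ((1 + ‖η‖) ^ (-(s * r))) + ENNReal.ofReal ((1 + ‖ξ - η‖) ^ (-(s * r))))
  calc _ ≤ ∫⁻ q : ℝ × E, A q.2 * ENNReal.ofReal ((1 + |(|q.1|) - ‖q.2‖|) ^ (-(b * r)))
        ∂(volume.prod μ) := by
        refine lintegral_mono fun ⟨α, η⟩ => ?_
        rw [← ENNReal.ofReal_mul (by positivity), ← ENNReal.ofReal_mul (by positivity),
          ← ENNReal.ofReal_div_of_pos (by positivity),
          ENNReal.ofReal_rpow_of_nonneg (by positivity) hr]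
        refine (ENNReal.ofReal_le_ofReal (one_add_rpow_div_rpow_le_of_le_add hr hs
          (norm_nonneg _) (norm_nonneg _) (norm_nonneg _) (abs_nonneg _)
          (norm_le_insert' ξ η))).trans_eq ?_
        rw [ENNReal.ofReal_mul (by positivity), ENNReal.ofReal_mul (by positivity),
          ENNReal.ofReal_add (by positivity) (by positivity)]
    _ = ∫⁻ η, A η * (∫⁻ α : ℝ, ENNReal.ofReal ((1 + |(|α|) - ‖η‖|) ^ (-(b * r)))) ∂μ := by
        rw [lintegral_prod_symm _ (by fun_prop)]
        dsimp only
        exact lintegral_congr fun η => lintegral_const_mul _ (by fun_prop)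
    _ ≤ ∫⁻ η, A η * (2 * ∫⁻ α : ℝ, ENNReal.ofReal ((1 + |α|) ^ (-(b * r)))) ∂μ := by
        gcongr with η
        exact lintegral_one_add_abs_abs_sub_rpow_neg_le _ _
    _ = _ := by
        rw [lintegral_mul_const _ (by fun_prop), lintegral_const_mul _ (by fun_prop),
          lintegral_one_add_norm_rpow_neg_add_sub]

theorem mult_embedding_Xsb_general (r r' b s : ℝ) (hr : 1 < r)
    (hrr' : 1 / r + 1 / r' = 1) (hb : 1 / r < b) (hs : 1 + 1 / r < s) :
    ∃ C : ℝ≥0, ∀ F G : ℝ × EuclideanSpace ℝ (Fin 2) → ℝ≥0∞,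
      Measurable F → Measurable G →
      (∫⁻ p : ℝ × EuclideanSpace ℝ (Fin 2),
          (ENNReal.ofReal ((1 + ‖p.2‖) ^ (s - 1)) *
            ∫⁻ q : ℝ × EuclideanSpace ℝ (Fin 2), F q * G (p - q)) ^ r') ^ (1 / r')
        ≤ C * (∫⁻ p : ℝ × EuclideanSpace ℝ (Fin 2),
              (ENNReal.ofReal ((1 + ‖p.2‖) ^ s) *
                ENNReal.ofReal ((1 + |(|p.1|) - ‖p.2‖|) ^ b) * F p) ^ r') ^ (1 / r')
            * (∫⁻ p : ℝ × EuclideanSpace ℝ (Fin 2),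
              (ENNReal.ofReal ((1 + ‖p.2‖) ^ (s - 1)) * G p) ^ r') ^ (1 / r') := by
  have hconj : r.HolderConjugate r' :=
    Real.holderConjugate_iff.mpr ⟨hr, by simpa only [one_div] using hrr'⟩
  have hr0 : 0 < r := by linarith
  have hbr : 1 < b * r := (div_lt_iff₀ hr0).mp hb
  have hs1 : 1 ≤ s := by linarith [one_div_pos.mpr hr0]
  have hsr : 2 < s * r := by
    have h := mul_lt_mul_of_pos_right hs hr0
    rw [add_mul, one_div_mul_cancel hr0.ne'] at h
    linarith
  set K : ℝ≥0∞ := ENNReal.ofReal (2 ^ ((s - 1) * r)) *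
    (2 * ∫⁻ η : EuclideanSpace ℝ (Fin 2), ENNReal.ofReal ((1 + ‖η‖) ^ (-(s * r)))) *
    (2 * ∫⁻ α : ℝ, ENNReal.ofReal ((1 + |α|) ^ (-(b * r))))
  have hK : K ≠ ∞ := by
    have hsr' : (Module.finrank ℝ (EuclideanSpace ℝ (Fin 2)) : ℝ) < s * r := by
      simpa using hsr
    have hbr' : (Module.finrank ℝ ℝ : ℝ) < b * r := by simpa using hbr
    have hKa := finite_integral_one_add_norm (μ := volume) hsr'
    have hKb := finite_integral_one_add_norm (μ := volume) hbr'
    simp only [Real.norm_eq_abs] at hKb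
    finiteness
  refine ⟨(K ^ (1 / r)).toNNReal, fun F G hF hG => ?_⟩
  rw [coe_toNNReal (rpow_ne_top_of_nonneg (by positivity) hK)]
  exact lintegral_weighted_convolution_rpow_le (μ := volume.prod volume) hconj
    (w₀ := fun p : ℝ × EuclideanSpace ℝ (Fin 2) => ENNReal.ofReal ((1 + ‖p.2‖) ^ (s - 1)))
    (w₁ := fun p =>
      ENNReal.ofReal ((1 + ‖p.2‖) ^ s) * ENNReal.ofReal ((1 + |(|p.1|) - ‖p.2‖|) ^ b))
    (w₂ := fun p => ENNReal.ofReal ((1 + ‖p.2‖) ^ (s - 1))) (by fun_prop) (by fun_prop)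
    (fun _ => by positivity) (fun _ => by finiteness) (fun _ => by positivity)
    (fun _ => by finiteness) (fun p => lintegral_wave_kernel_rpow_le volume hr0.le hs1 p.2) hF hG

/-- The multiplicative embedding `X^r_{s,b} · X^r_{s−1,0} ↪ X^r_{s−1,0}` in dimension
`n = 2`, stated on the Fourier side as a weighted convolution estimate: for `1 < r ≤ 2`,
`b > 1/r` and `s > 1 + 1/r`,
`‖⟨ξ⟩^{s−1}(F∗G)‖_{L^{r'}} ≤ C ‖⟨ξ⟩^s⟨|τ|−|ξ|⟩^b F‖_{L^{r'}} ‖⟨ξ⟩^{s−1} G‖_{L^{r'}}`. -/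
theorem mult_embedding_Xsb (r r' b s : ℝ) (hr : 1 < r) (hr2 : r ≤ 2)
    (hrr' : 1 / r + 1 / r' = 1) (hb : 1 / r < b) (hs : 1 + 1 / r < s) :
    ∃ C : ℝ≥0, ∀ F G : ℝ × EuclideanSpace ℝ (Fin 2) → ℝ≥0∞,
      Measurable F → Measurable G →
      (∫⁻ p : ℝ × EuclideanSpace ℝ (Fin 2),
          (ENNReal.ofReal ((1 + ‖p.2‖) ^ (s - 1)) *
            ∫⁻ q : ℝ × EuclideanSpace ℝ (Fin 2), F q * G (p - q)) ^ r') ^ (1 / r')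
        ≤ C * (∫⁻ p : ℝ × EuclideanSpace ℝ (Fin 2),
              (ENNReal.ofReal ((1 + ‖p.2‖) ^ s) *
                ENNReal.ofReal ((1 + |(|p.1|) - ‖p.2‖|) ^ b) * F p) ^ r') ^ (1 / r')
            * (∫⁻ p : ℝ × EuclideanSpace ℝ (Fin 2),
              (ENNReal.ofReal ((1 + ‖p.2‖) ^ (s - 1)) * G p) ^ r') ^ (1 / r') :=
  mult_embedding_Xsb_general r r' b s hr hrr' hb hs
end

section
/- Let 1<r≤2, b>1/r and s>2/r. Then there is a constant C such that for all measurable F, G : ℝ×ℝ² → [0,∞], ‖F∗G‖_{L^{r'}(ℝ×ℝ², dτ dξ)} ≤ C ‖⟨ξ⟩^s ⟨|τ|−|ξ|⟩^b F(τ,ξ)‖_{L^{r'}} ‖G‖_{L^{r'}}. (On the Fourier side this is the embedding X^r_{s,b} · L̂^r_{t,x} ↪ L̂^r_{t,x} in dimension n = 2.) -/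
/-!
Young's inequality `‖F ∗ G‖_{r'} ≤ ‖F‖_1 ‖G‖_{r'}` reduces the claim to
`‖F‖_1 ≤ C ‖w F‖_{r'}` for the weight `w = ⟨ξ⟩^s ⟨|τ| - |ξ|⟩^b`, which by Hölder holds with
`C = ‖w⁻¹‖_r`. This is finite because `b r > 1` and `s r > 2`: for fixed `ξ`, folding `τ ↦ |τ|`
bounds `∫ ⟨|τ| - |ξ|⟩^{-br} dτ` by `2 ∫ ⟨τ⟩^{-br} dτ`, which leaves `∫ ⟨ξ⟩^{-sr} dξ < ∞`.
-/

open MeasureTheory ENNReal NNReal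

section Holder

variable {α : Type*} [MeasurableSpace α] {μ : Measure α}

theorem lintegral_mul_rpow_le {p : ℝ} (hp1 : 1 < p) {F g : α → ℝ≥0∞}
    (hF : AEMeasurable F μ) (hg : AEMeasurable g μ) :
    (∫⁻ x, F x * g x ∂μ) ^ p ≤ (∫⁻ x, F x ∂μ) ^ (p - 1) * ∫⁻ x, F x * g x ^ p ∂μ := by
  obtain ⟨q, hpq⟩ : ∃ q, p.HolderConjugate q := ⟨_, .conjExponent hp1⟩
  have hp := hpq.pos
  have hq := hpq.symm.pos
  have hsplit (x : α) : F x * g x = F x ^ (1 / q) * (F x ^ (1 / p) * g x) := by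
    rw [← mul_assoc, ← ENNReal.rpow_add_of_nonneg _ _ (by positivity) (by positivity),
      hpq.symm.one_div_add_one_div, div_one, ENNReal.rpow_one]
  have holder := ENNReal.lintegral_mul_le_Lp_mul_Lq μ hpq.symm (hF.pow_const (1 / q))
    ((hF.pow_const (1 / p)).mul hg)
  simp only [Pi.mul_apply, ← hsplit] at holder
  simp_rw [← ENNReal.rpow_mul, one_div_mul_cancel hq.ne', ENNReal.rpow_one,
    ENNReal.mul_rpow_of_nonneg _ _ hp.le, ← ENNReal.rpow_mul, one_div_mul_cancel hp.ne',
    ENNReal.rpow_one] at holder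
  calc (∫⁻ x, F x * g x ∂μ) ^ p
      ≤ ((∫⁻ x, F x ∂μ) ^ (1 / q) * (∫⁻ x, F x * g x ^ p ∂μ) ^ (1 / p)) ^ p := by gcongr
    _ = (∫⁻ x, F x ∂μ) ^ (p - 1) * ∫⁻ x, F x * g x ^ p ∂μ := by
      rw [ENNReal.mul_rpow_of_nonneg _ _ hp.le, ← ENNReal.rpow_mul, ← ENNReal.rpow_mul,
        one_div_mul_cancel hp.ne', ENNReal.rpow_one, one_div_mul_eq_div,
        hpq.div_conj_eq_sub_one]

theorem lintegral_le_Lp_mul_Lq_of_mul_eq_one {p q : ℝ} (hpq : p.HolderConjugate q)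
    {v w F : α → ℝ≥0∞} (hv : AEMeasurable v μ) (hwF : AEMeasurable (fun x => w x * F x) μ)
    (hvw : ∀ x, v x * w x = 1) :
    ∫⁻ x, F x ∂μ ≤ (∫⁻ x, v x ^ p ∂μ) ^ (1 / p) * (∫⁻ x, (w x * F x) ^ q ∂μ) ^ (1 / q) := by
  calc ∫⁻ x, F x ∂μ = ∫⁻ x, (v * fun x => w x * F x) x ∂μ := by
        simp only [Pi.mul_apply, ← mul_assoc, hvw, one_mul]
    _ ≤ _ := ENNReal.lintegral_mul_le_Lp_mul_Lq μ hpq hv hwF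

end Holder

section Convolution

variable {G : Type*} [MeasurableSpace G] [AddGroup G] [MeasurableAdd G] [MeasurableSub₂ G]
  {μ : Measure G} [SFinite μ] [μ.IsAddRightInvariant]

theorem lintegral_lintegral_mul_comp_sub {F H : G → ℝ≥0∞} (hF : Measurable F)
    (hH : Measurable H) :
    ∫⁻ x, ∫⁻ y, F y * H (x - y) ∂μ ∂μ = (∫⁻ y, F y ∂μ) * ∫⁻ x, H x ∂μ := by
  rw [lintegral_lintegral_swap (by fun_prop)]
  have inner (y : G) : ∫⁻ x, F y * H (x - y) ∂μ = F y * ∫⁻ x, H x ∂μ := by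
    rw [lintegral_const_mul _ (by fun_prop), lintegral_sub_right_eq_self H y]
  simp_rw [inner]
  exact lintegral_mul_const _ hF

theorem lintegral_conv_rpow_le {p : ℝ} (hp : 1 < p) {F H : G → ℝ≥0∞} (hF : Measurable F)
    (hH : Measurable H) :
    (∫⁻ x, (∫⁻ y, F y * H (x - y) ∂μ) ^ p ∂μ) ^ (1 / p)
      ≤ (∫⁻ y, F y ∂μ) * (∫⁻ x, H x ^ p ∂μ) ^ (1 / p) := by
  have hp0 : 0 < p := by linarith
  set I := ∫⁻ y, F y ∂μ
  have pointwise (x : G) :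
      (∫⁻ y, F y * H (x - y) ∂μ) ^ p ≤ I ^ (p - 1) * ∫⁻ y, F y * H (x - y) ^ p ∂μ :=
    lintegral_mul_rpow_le hp hF.aemeasurable (by fun_prop)
  have hmeas : Measurable fun x => ∫⁻ y, F y * H (x - y) ^ p ∂μ :=
    Measurable.lintegral_prod_right' (f := fun z : G × G => F z.2 * H (z.1 - z.2) ^ p)
      (by fun_prop)
  calc (∫⁻ x, (∫⁻ y, F y * H (x - y) ∂μ) ^ p ∂μ) ^ (1 / p)
      ≤ (I ^ (p - 1) * (I * ∫⁻ x, H x ^ p ∂μ)) ^ (1 / p) := by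
        gcongr
        calc ∫⁻ x, (∫⁻ y, F y * H (x - y) ∂μ) ^ p ∂μ
            ≤ ∫⁻ x, I ^ (p - 1) * ∫⁻ y, F y * H (x - y) ^ p ∂μ ∂μ := lintegral_mono pointwise
          _ = I ^ (p - 1) * (I * ∫⁻ x, H x ^ p ∂μ) := by
            rw [lintegral_const_mul _ hmeas, lintegral_lintegral_mul_comp_sub hF (hH.pow_const p)]
    _ = I * (∫⁻ x, H x ^ p ∂μ) ^ (1 / p) := by
        have hIp : I ^ (p - 1) * I = I ^ p := by
          calc I ^ (p - 1) * I = I ^ (p - 1) * I ^ (1 : ℝ) := by rw [ENNReal.rpow_one]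
            _ = I ^ p := by
              rw [← ENNReal.rpow_add_of_nonneg _ _ (by linarith) zero_le_one, sub_add_cancel]
        rw [← mul_assoc, hIp, ENNReal.mul_rpow_of_nonneg _ _ (by positivity), ← ENNReal.rpow_mul,
          mul_one_div_cancel hp0.ne', ENNReal.rpow_one]

end Convolution

theorem lintegral_comp_abs_sub_le {f : ℝ → ℝ≥0∞} (hf : Measurable f) (a : ℝ) :
    ∫⁻ τ, f (|τ| - a) ≤ 2 * ∫⁻ u, f u := by
  calc ∫⁻ τ, f (|τ| - a) ≤ ∫⁻ τ, (f (τ - a) + f (-τ - a)) := lintegral_mono fun τ => by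
        rcases le_or_gt 0 τ with hτ | hτ
        · rw [abs_of_nonneg hτ]; exact le_self_add
        · rw [abs_of_neg hτ]; exact le_add_self
    _ = 2 * ∫⁻ u, f u := by
        rw [lintegral_add_left (by fun_prop), lintegral_sub_right_eq_self f a,
          lintegral_neg_eq_self (fun τ => f (τ - a)), lintegral_sub_right_eq_self f a, two_mul]

theorem ofReal_rpow_neg_mul_ofReal_rpow {x : ℝ} (hx : 0 < x) (a : ℝ) :
    ENNReal.ofReal (x ^ (-a)) * ENNReal.ofReal (x ^ a) = 1 := by
  rw [← ENNReal.ofReal_mul (by positivity), Real.rpow_neg hx.le,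
    inv_mul_cancel₀ (by positivity), ENNReal.ofReal_one]

theorem ofReal_rpow_rpow {x : ℝ} (hx : 0 ≤ x) (a : ℝ) {r : ℝ} (hr : 0 ≤ r) :
    ENNReal.ofReal (x ^ a) ^ r = ENNReal.ofReal (x ^ (a * r)) := by
  rw [ENNReal.ofReal_rpow_of_nonneg (by positivity) hr, Real.rpow_mul hx]

section XsbWeight

variable {E : Type*} [NormedAddCommGroup E]

noncomputable def xsbWeight (s b : ℝ) (p : ℝ × E) : ℝ≥0∞ :=
  ENNReal.ofReal ((1 + ‖p.2‖) ^ s) * ENNReal.ofReal ((1 + |(|p.1|) - ‖p.2‖|) ^ b)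

theorem xsbWeight_neg_mul_xsbWeight (s b : ℝ) (p : ℝ × E) :
    xsbWeight (-s) (-b) p * xsbWeight s b p = 1 := by
  rw [xsbWeight, xsbWeight, mul_mul_mul_comm, ofReal_rpow_neg_mul_ofReal_rpow (by positivity),
    ofReal_rpow_neg_mul_ofReal_rpow (by positivity), one_mul]

theorem xsbWeight_rpow (s b : ℝ) {r : ℝ} (hr : 0 ≤ r) (p : ℝ × E) :
    xsbWeight s b p ^ r = xsbWeight (s * r) (b * r) p := by
  rw [xsbWeight, xsbWeight, ENNReal.mul_rpow_of_nonneg _ _ hr,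
    ofReal_rpow_rpow (by positivity) _ hr, ofReal_rpow_rpow (by positivity) _ hr]

variable [MeasurableSpace E] [BorelSpace E]

theorem measurable_xsbWeight (s b : ℝ) : Measurable (xsbWeight (E := E) s b) := by
  unfold xsbWeight
  fun_prop

theorem lintegral_xsbWeight_neg_lt_top [NormedSpace ℝ E] [FiniteDimensional ℝ E]
    (μ : Measure E) [μ.IsAddHaarMeasure] {σ β : ℝ} (hσ : Module.finrank ℝ E < σ) (hβ : 1 < β) :
    ∫⁻ p, xsbWeight (-σ) (-β) p ∂(volume.prod μ) < ∞ := by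
  set f : ℝ → ℝ≥0∞ := fun u => ENNReal.ofReal ((1 + |u|) ^ (-β))
  have hA : ∫⁻ u, f u < ∞ := by
    simpa [f, Real.norm_eq_abs] using
      (integrable_one_add_norm (E := ℝ) (μ := volume) (by simpa using hβ)).lintegral_lt_top
  have hB := (integrable_one_add_norm (μ := μ) hσ).lintegral_lt_top
  rw [lintegral_prod_symm _ (measurable_xsbWeight _ _).aemeasurable]
  calc ∫⁻ ξ, (∫⁻ τ, ENNReal.ofReal ((1 + ‖ξ‖) ^ (-σ)) * f (|τ| - ‖ξ‖)) ∂μ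
      ≤ ∫⁻ ξ, ENNReal.ofReal ((1 + ‖ξ‖) ^ (-σ)) * (2 * ∫⁻ u, f u) ∂μ := by
        gcongr with ξ
        rw [lintegral_const_mul _ (by fun_prop)]
        gcongr
        exact lintegral_comp_abs_sub_le (by fun_prop) _
    _ < ∞ := by
        rw [lintegral_mul_const _ (by fun_prop)]
        exact ENNReal.mul_lt_top hB (ENNReal.mul_lt_top (by simp) hA)

end XsbWeight

theorem Xsb_mult_Lhat_general (r r' b s : ℝ) (hr : 1 < r)
    (hrr' : 1 / r + 1 / r' = 1) (hb : 1 / r < b) (hs : 2 / r < s) :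
    ∃ C : ℝ≥0, ∀ F G : ℝ × EuclideanSpace ℝ (Fin 2) → ℝ≥0∞,
      Measurable F → Measurable G →
      (∫⁻ p : ℝ × EuclideanSpace ℝ (Fin 2),
          (∫⁻ q : ℝ × EuclideanSpace ℝ (Fin 2), F q * G (p - q)) ^ r') ^ (1 / r')
        ≤ C * (∫⁻ p : ℝ × EuclideanSpace ℝ (Fin 2),
              (ENNReal.ofReal ((1 + ‖p.2‖) ^ s) *
                ENNReal.ofReal ((1 + |(|p.1|) - ‖p.2‖|) ^ b) * F p) ^ r') ^ (1 / r')
            * (∫⁻ p : ℝ × EuclideanSpace ℝ (Fin 2), (G p) ^ r') ^ (1 / r') := by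
  have hrr : r.HolderConjugate r' :=
    Real.holderConjugate_iff.mpr ⟨hr, by simpa only [one_div] using hrr'⟩
  have hr0 := hrr.pos
  have hv : ∫⁻ p : ℝ × EuclideanSpace ℝ (Fin 2), xsbWeight (-s) (-b) p ^ r < ∞ := by
    simp_rw [xsbWeight_rpow _ _ hr0.le, neg_mul]
    refine lintegral_xsbWeight_neg_lt_top volume ?_ ?_
    · rwa [finrank_euclideanSpace_fin, Nat.cast_ofNat, ← div_lt_iff₀ hr0]
    · rwa [← div_lt_iff₀ hr0]
  refine ⟨((∫⁻ p : ℝ × EuclideanSpace ℝ (Fin 2), xsbWeight (-s) (-b) p ^ r) ^ (1 / r)).toNNReal,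
    fun F G hF hG => ?_⟩
  rw [ENNReal.coe_toNNReal (ENNReal.rpow_ne_top_of_nonneg (by positivity) hv.ne)]
  have : (volume : Measure (ℝ × EuclideanSpace ℝ (Fin 2))).IsAddRightInvariant := by
    rw [Measure.volume_eq_prod]; infer_instance
  calc _ ≤ (∫⁻ q, F q) * (∫⁻ p, G p ^ r') ^ (1 / r') := lintegral_conv_rpow_le hrr.symm.lt hF hG
    _ ≤ _ := by
      gcongr
      exact lintegral_le_Lp_mul_Lq_of_mul_eq_one hrr (measurable_xsbWeight _ _).aemeasurable
        (by fun_prop) (xsbWeight_neg_mul_xsbWeight s b)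

/-- Fourier-side form of the embedding `X^r_{s,b} · L̂^r_{t,x} ↪ L̂^r_{t,x}` in dimension
`n = 2`: for `1 < r ≤ 2`, `b > 1/r` and `s > 2/r`,
`‖F∗G‖_{L^{r'}(ℝ×ℝ²)} ≤ C ‖⟨ξ⟩^s⟨|τ|−|ξ|⟩^b F‖_{L^{r'}} ‖G‖_{L^{r'}}`. -/
theorem Xsb_mult_Lhat (r r' b s : ℝ) (hr : 1 < r) (hr2 : r ≤ 2)
    (hrr' : 1 / r + 1 / r' = 1) (hb : 1 / r < b) (hs : 2 / r < s) :
    ∃ C : ℝ≥0, ∀ F G : ℝ × EuclideanSpace ℝ (Fin 2) → ℝ≥0∞,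
      Measurable F → Measurable G →
      (∫⁻ p : ℝ × EuclideanSpace ℝ (Fin 2),
          (∫⁻ q : ℝ × EuclideanSpace ℝ (Fin 2), F q * G (p - q)) ^ r') ^ (1 / r')
        ≤ C * (∫⁻ p : ℝ × EuclideanSpace ℝ (Fin 2),
              (ENNReal.ofReal ((1 + ‖p.2‖) ^ s) *
                ENNReal.ofReal ((1 + |(|p.1|) - ‖p.2‖|) ^ b) * F p) ^ r') ^ (1 / r')
            * (∫⁻ p : ℝ × EuclideanSpace ℝ (Fin 2), (G p) ^ r') ^ (1 / r') :=
  Xsb_mult_Lhat_general r r' b s hr hrr' hb hs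
end

section
/- Null structure of the Ward wave map equation: let n ≥ 1 and let J be a twice continuously differentiable map from an open subset U of ℝ³ (coordinates (t,x,y)) into the invertible n×n complex matrices. Then pointwise on U, J·[ ∂_t(J^{−1}∂_tJ) − ∂_x(J^{−1}∂_xJ) − ∂_y(J^{−1}∂_yJ) − (J^{−1}∂_tJ · J^{−1}∂_yJ − J^{−1}∂_yJ · J^{−1}∂_tJ) ] = □J + J·Q₀(J^{−1},J) + J·Q₀₂(J^{−1},J), where □J = ∂_t²J − ∂_x²J − ∂_y²J, Q₀(A,B) = ∂_tA·∂_tB − ∂_xA·∂_xB − ∂_yA·∂_yB, and Q₀₂(A,B) = ∂_tA·∂_yB − ∂_yA·∂_tB (all products are matrix products). In particular, J solves the Ward wave map equation ∂_t(J^{−1}J_t) − ∂_x(J^{−1}J_x) − ∂_y(J^{−1}J_y) − [J^{−1}J_t, J^{−1}J_y] = 0 if and only if □J + J·Q₀(J^{−1},J) + J·Q₀₂(J^{−1},J) = 0. -/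
open Matrix

attribute [local instance] Matrix.normedAddCommGroup Matrix.normedSpace

/-- Partial derivative in the first (time) coordinate. -/
noncomputable def dt' {M : Type*} [NormedAddCommGroup M] [NormedSpace ℝ M]
    (J : ℝ × ℝ × ℝ → M) (p : ℝ × ℝ × ℝ) : M :=
  deriv (fun τ => J (τ, p.2.1, p.2.2)) p.1

/-- Partial derivative in the second (x) coordinate. -/
noncomputable def dx' {M : Type*} [NormedAddCommGroup M] [NormedSpace ℝ M]
    (J : ℝ × ℝ × ℝ → M) (p : ℝ × ℝ × ℝ) : M :=
  deriv (fun τ => J (p.1, τ, p.2.2)) p.2.1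

/-- Partial derivative in the third (y) coordinate. -/
noncomputable def dy' {M : Type*} [NormedAddCommGroup M] [NormedSpace ℝ M]
    (J : ℝ × ℝ × ℝ → M) (p : ℝ × ℝ × ℝ) : M :=
  deriv (fun τ => J (p.1, p.2.1, τ)) p.2.2

/-!
Each partial derivative is the line derivative along a coordinate vector. Along any direction,
the derivative of the inverse, `∂(J⁻¹) = -J⁻¹ (∂J) J⁻¹`, and the product rule give
`∂(J⁻¹ ∂J) = -J⁻¹ (∂J) J⁻¹ (∂J) + J⁻¹ ∂²J`. Substituting these, the pointwise identity becomes an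
identity in a noncommutative ring which only uses `J J⁻¹ = 1`. Since `J` is invertible, the Ward
operator vanishes exactly when `J` times it does, which gives the equivalence.
-/

open Filter Topology

section MatrixInverse

variable {R m : Type*} [Field R] [TopologicalSpace R] [IsTopologicalDivisionRing R]
  [Fintype m] [DecidableEq m] {X : Type*} [TopologicalSpace X] {g : X → Matrix m m R} {x : X}

theorem ContinuousAt.matrix_inv (hg : ContinuousAt g x) (hx : IsUnit (g x)) :
    ContinuousAt (fun y => (g y)⁻¹) x := by
  refine (continuousAt_matrix_inv _ ?_).comp hg
  rw [Ring.inverse_eq_inv']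
  exact continuousAt_inv₀ ((Matrix.isUnit_iff_isUnit_det _).1 hx).ne_zero

theorem ContinuousAt.eventually_isUnit_matrix [T1Space R] (hg : ContinuousAt g x)
    (hx : IsUnit (g x)) :
    ∀ᶠ y in 𝓝 x, IsUnit (g y) := by
  have hdet : ContinuousAt (fun y => (g y).det) x :=
    continuous_id.matrix_det.continuousAt.comp hg
  filter_upwards [hdet.eventually_ne ((Matrix.isUnit_iff_isUnit_det _).1 hx).ne_zero] with y hy
  exact (Matrix.isUnit_iff_isUnit_det _).2 hy.isUnit

end MatrixInverse

section MatrixCalculus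

variable {𝕜 R : Type*} [NontriviallyNormedField 𝕜] [NormedField R] [NormedAlgebra 𝕜 R]
  {l m o : Type*} [Fintype m]

theorem hasDerivAt_matrix {A : 𝕜 → Matrix l m R} {A' : Matrix l m R} {t : 𝕜} :
    HasDerivAt A A' t ↔ ∀ i j, HasDerivAt (fun s => A s i j) (A' i j) t :=
  ⟨fun h i j => hasDerivAt_pi.1 (hasDerivAt_pi.1 h i) j,
    fun h => hasDerivAt_pi.2 fun i => hasDerivAt_pi.2 fun j => h i j⟩

theorem HasDerivAt.matrix_mul [Fintype l] [Fintype o] {A : 𝕜 → Matrix l m R}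
    {B : 𝕜 → Matrix m o R} {A' : Matrix l m R} {B' : Matrix m o R} {t : 𝕜}
    (hA : HasDerivAt A A' t) (hB : HasDerivAt B B' t) :
    HasDerivAt (fun s => A s * B s) (A' * B t + A t * B') t := by
  rw [hasDerivAt_matrix] at hA hB ⊢
  intro i j
  exact (HasDerivAt.fun_sum fun k _ => (hA i k).mul (hB k j)).congr_deriv
    (by rw [Finset.sum_add_distrib]; rfl)

theorem HasDerivAt.matrix_inv [DecidableEq m] {g : 𝕜 → Matrix m m R} {g' : Matrix m m R} {t : 𝕜}
    (hg : HasDerivAt g g' t) (ht : IsUnit (g t)) :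
    HasDerivAt (fun s => (g s)⁻¹) (-((g t)⁻¹ * g' * (g t)⁻¹)) t := by
  have hinv : Tendsto (fun s => (g s)⁻¹) (𝓝[≠] t) (𝓝 (g t)⁻¹) :=
    (hg.continuousAt.matrix_inv ht).tendsto.mono_left nhdsWithin_le_nhds
  -- `(g s)⁻¹ - (g t)⁻¹ = (g s)⁻¹ * (g t - g s) * (g t)⁻¹` once `g s` is invertible
  have hslope : slope (fun s => (g s)⁻¹) t =ᶠ[𝓝[≠] t]
      fun s => -((g s)⁻¹ * slope g t s * (g t)⁻¹) := by
    filter_upwards [nhdsWithin_le_nhds (hg.continuousAt.eventually_isUnit_matrix ht)] with s hs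
    have hs' := (Matrix.isUnit_iff_isUnit_det _).1 hs
    have ht' := (Matrix.isUnit_iff_isUnit_det _).1 ht
    rw [slope_def_module, slope_def_module, Matrix.mul_smul, Matrix.smul_mul, ← smul_neg]
    congr 1
    rw [Matrix.mul_sub, Matrix.sub_mul, Matrix.mul_nonsing_inv_cancel_right _ _ ht',
      Matrix.nonsing_inv_mul _ hs', Matrix.one_mul]
    abel
  refine hasDerivAt_iff_tendsto_slope.2 ?_
  exact ((hinv.mul (hasDerivAt_iff_tendsto_slope.1 hg)).mul_const _).neg.congr' hslope.symm

variable {E : Type*} [AddCommGroup E] [Module 𝕜 E] {x v : E}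

theorem HasLineDerivAt.matrix_mul [Fintype l] [Fintype o] {A : E → Matrix l m R}
    {B : E → Matrix m o R} {A' : Matrix l m R} {B' : Matrix m o R}
    (hA : HasLineDerivAt 𝕜 A A' x v) (hB : HasLineDerivAt 𝕜 B B' x v) :
    HasLineDerivAt 𝕜 (fun y => A y * B y) (A' * B x + A x * B') x v := by
  have h := HasDerivAt.matrix_mul hA hB
  rw [zero_smul, add_zero] at h
  exact h

theorem HasLineDerivAt.matrix_inv [DecidableEq m] {g : E → Matrix m m R} {g' : Matrix m m R}
    (hg : HasLineDerivAt 𝕜 g g' x v) (hx : IsUnit (g x)) :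
    HasLineDerivAt 𝕜 (fun y => (g y)⁻¹) (-((g x)⁻¹ * g' * (g x)⁻¹)) x v := by
  have h0 : x + (0 : 𝕜) • v = x := by rw [zero_smul, add_zero]
  have h := HasDerivAt.matrix_inv hg (by rwa [h0])
  rw [h0] at h
  exact h

theorem lineDeriv_matrix_inv [DecidableEq m] {g : E → Matrix m m R}
    (hg : LineDifferentiableAt 𝕜 g x v) (hx : IsUnit (g x)) :
    lineDeriv 𝕜 (fun y => (g y)⁻¹) x v = -((g x)⁻¹ * lineDeriv 𝕜 g x v * (g x)⁻¹) :=
  (hg.hasLineDerivAt.matrix_inv hx).lineDeriv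

theorem lineDeriv_matrix_inv_mul_lineDeriv [DecidableEq m] {g : E → Matrix m m R}
    (hg : LineDifferentiableAt 𝕜 g x v) (hg' : LineDifferentiableAt 𝕜 (lineDeriv 𝕜 g · v) x v)
    (hx : IsUnit (g x)) :
    lineDeriv 𝕜 (fun y => (g y)⁻¹ * lineDeriv 𝕜 g y v) x v =
      -((g x)⁻¹ * lineDeriv 𝕜 g x v * (g x)⁻¹) * lineDeriv 𝕜 g x v
        + (g x)⁻¹ * lineDeriv 𝕜 (lineDeriv 𝕜 g · v) x v :=
  ((hg.hasLineDerivAt.matrix_inv hx).matrix_mul hg'.hasLineDerivAt).lineDeriv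

end MatrixCalculus

section LineDeriv

variable {𝕜 E F : Type*} [NontriviallyNormedField 𝕜] [NormedAddCommGroup F] [NormedSpace 𝕜 F]

theorem deriv_comp_add_sub_smul [AddCommGroup E] [Module 𝕜 E] (f : E → F) (x v : E) (a : 𝕜) :
    deriv (fun τ => f (x + (τ - a) • v)) a = lineDeriv 𝕜 f x v := by
  rw [deriv_comp_sub_const (f := fun t => f (x + t • v)), sub_self, lineDeriv]

theorem ContDiffOn.differentiableAt_lineDeriv [NormedAddCommGroup E] [NormedSpace 𝕜 E]
    {f : E → F} {U : Set E} (hf : ContDiffOn 𝕜 2 f U) (hU : IsOpen U) {x : E} (hx : x ∈ U)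
    (v : E) : DifferentiableAt 𝕜 (lineDeriv 𝕜 f · v) x := by
  have hfderiv : DifferentiableAt 𝕜 (fderiv 𝕜 f · v) x :=
    (((hf.fderiv_of_isOpen hU (by norm_num)).contDiffAt (hU.mem_nhds hx)).differentiableAt
      one_ne_zero).clm_apply (differentiableAt_const v)
  refine hfderiv.congr_of_eventuallyEq ?_
  filter_upwards [hU.mem_nhds hx] with y hy
  exact ((hf.contDiffAt (hU.mem_nhds hy)).differentiableAt (by norm_num)).lineDeriv_eq_fderiv

end LineDeriv

section Coordinates

variable {M : Type*} [NormedAddCommGroup M] [NormedSpace ℝ M] (f : ℝ × ℝ × ℝ → M)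

theorem dt'_eq_lineDeriv : dt' f = fun p => lineDeriv ℝ f p (1, 0, 0) := by
  ext p
  rw [dt', ← deriv_comp_add_sub_smul f p (1, 0, 0) p.1]
  congr with τ
  congr 1
  ext <;> simp

theorem dx'_eq_lineDeriv : dx' f = fun p => lineDeriv ℝ f p (0, 1, 0) := by
  ext p
  rw [dx', ← deriv_comp_add_sub_smul f p (0, 1, 0) p.2.1]
  congr with τ
  congr 1
  ext <;> simp

theorem dy'_eq_lineDeriv : dy' f = fun p => lineDeriv ℝ f p (0, 0, 1) := by
  ext p
  rw [dy', ← deriv_comp_add_sub_smul f p (0, 0, 1) p.2.2]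
  congr with τ
  congr 1
  ext <;> simp

end Coordinates

theorem ward_ring_identity {R : Type*} [Ring R] (a b Jt Jx Jy Jtt Jxx Jyy : R) (hab : a * b = 1) :
    a * ((-(b * Jt * b) * Jt + b * Jtt) - (-(b * Jx * b) * Jx + b * Jxx)
        - (-(b * Jy * b) * Jy + b * Jyy) - (b * Jt * (b * Jy) - b * Jy * (b * Jt)))
      = (Jtt - Jxx - Jyy)
        + a * (-(b * Jt * b) * Jt - -(b * Jx * b) * Jx - -(b * Jy * b) * Jy)
        + a * (-(b * Jt * b) * Jy - -(b * Jy * b) * Jt) := by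
  simp only [mul_sub, mul_add, mul_neg, ← mul_assoc, hab, one_mul]
  noncomm_ring

section Ward

variable {m R : Type*} [Fintype m] [DecidableEq m] [NormedField R] [NormedAlgebra ℝ R]

noncomputable def waveOperator {M : Type*} [NormedAddCommGroup M] [NormedSpace ℝ M]
    (J : ℝ × ℝ × ℝ → M) (p : ℝ × ℝ × ℝ) : M :=
  dt' (dt' J) p - dx' (dx' J) p - dy' (dy' J) p

noncomputable def wardOperator (J : ℝ × ℝ × ℝ → Matrix m m R) (p : ℝ × ℝ × ℝ) : Matrix m m R :=
  dt' (fun q => (J q)⁻¹ * dt' J q) p - dx' (fun q => (J q)⁻¹ * dx' J q) p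
    - dy' (fun q => (J q)⁻¹ * dy' J q) p
    - ((J p)⁻¹ * dt' J p * ((J p)⁻¹ * dy' J p) - (J p)⁻¹ * dy' J p * ((J p)⁻¹ * dt' J p))

noncomputable def nullFormQ0 (A B : ℝ × ℝ × ℝ → Matrix m m R) (p : ℝ × ℝ × ℝ) : Matrix m m R :=
  dt' A p * dt' B p - dx' A p * dx' B p - dy' A p * dy' B p

noncomputable def nullFormQ02 (A B : ℝ × ℝ × ℝ → Matrix m m R) (p : ℝ × ℝ × ℝ) : Matrix m m R :=
  dt' A p * dy' B p - dy' A p * dt' B p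

theorem mul_wardOperator_eq {U : Set (ℝ × ℝ × ℝ)} (hU : IsOpen U)
    {J : ℝ × ℝ × ℝ → Matrix m m R} (hJ : ContDiffOn ℝ 2 J U) {p : ℝ × ℝ × ℝ} (hp : p ∈ U)
    (hJp : IsUnit (J p)) :
    J p * wardOperator J p
      = waveOperator J p + J p * nullFormQ0 (fun q => (J q)⁻¹) J p
        + J p * nullFormQ02 (fun q => (J q)⁻¹) J p := by
  have hJ_line (v) : LineDifferentiableAt ℝ J p v :=
    ((hJ.contDiffAt (hU.mem_nhds hp)).differentiableAt (by norm_num)).lineDifferentiableAt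
  have hJ'_line (v) : LineDifferentiableAt ℝ (lineDeriv ℝ J · v) p v :=
    (hJ.differentiableAt_lineDeriv hU hp v).lineDifferentiableAt
  simp only [wardOperator, waveOperator, nullFormQ0, nullFormQ02, dt'_eq_lineDeriv,
    dx'_eq_lineDeriv, dy'_eq_lineDeriv]
  rw [lineDeriv_matrix_inv_mul_lineDeriv (hJ_line _) (hJ'_line _) hJp,
    lineDeriv_matrix_inv_mul_lineDeriv (hJ_line _) (hJ'_line _) hJp,
    lineDeriv_matrix_inv_mul_lineDeriv (hJ_line _) (hJ'_line _) hJp,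
    lineDeriv_matrix_inv (hJ_line _) hJp, lineDeriv_matrix_inv (hJ_line _) hJp,
    lineDeriv_matrix_inv (hJ_line _) hJp]
  exact ward_ring_identity _ _ _ _ _ _ _ _
    (Matrix.mul_nonsing_inv _ ((Matrix.isUnit_iff_isUnit_det _).1 hJp))

end Ward

theorem ward_null_structure_general (n : ℕ) (U : Set (ℝ × ℝ × ℝ)) (hU : IsOpen U)
    (J : ℝ × ℝ × ℝ → Matrix (Fin n) (Fin n) ℂ) (hJ : ContDiffOn ℝ 2 J U)
    (hJinv : ∀ p ∈ U, IsUnit (J p)) :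
    (∀ p ∈ U,
      J p * (dt' (fun q => (J q)⁻¹ * dt' J q) p - dx' (fun q => (J q)⁻¹ * dx' J q) p
          - dy' (fun q => (J q)⁻¹ * dy' J q) p
          - ((J p)⁻¹ * dt' J p * ((J p)⁻¹ * dy' J p)
              - (J p)⁻¹ * dy' J p * ((J p)⁻¹ * dt' J p)))
        = (dt' (dt' J) p - dx' (dx' J) p - dy' (dy' J) p)
          + J p * (dt' (fun q => (J q)⁻¹) p * dt' J p
              - dx' (fun q => (J q)⁻¹) p * dx' J p
              - dy' (fun q => (J q)⁻¹) p * dy' J p)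
          + J p * (dt' (fun q => (J q)⁻¹) p * dy' J p
              - dy' (fun q => (J q)⁻¹) p * dt' J p))
    ∧ ((∀ p ∈ U,
          dt' (fun q => (J q)⁻¹ * dt' J q) p - dx' (fun q => (J q)⁻¹ * dx' J q) p
            - dy' (fun q => (J q)⁻¹ * dy' J q) p
            - ((J p)⁻¹ * dt' J p * ((J p)⁻¹ * dy' J p)
                - (J p)⁻¹ * dy' J p * ((J p)⁻¹ * dt' J p)) = 0)
        ↔ (∀ p ∈ U,
          (dt' (dt' J) p - dx' (dx' J) p - dy' (dy' J) p)
            + J p * (dt' (fun q => (J q)⁻¹) p * dt' J p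
                - dx' (fun q => (J q)⁻¹) p * dx' J p
                - dy' (fun q => (J q)⁻¹) p * dy' J p)
            + J p * (dt' (fun q => (J q)⁻¹) p * dy' J p
                - dy' (fun q => (J q)⁻¹) p * dt' J p) = 0)) := by
  have key (p) (hp : p ∈ U) := mul_wardOperator_eq hU hJ hp (hJinv p hp)
  refine ⟨key, forall₂_congr fun p hp => ?_⟩
  rw [← (hJinv p hp).mul_right_eq_zero]
  exact iff_of_eq (congrArg (· = 0) (key p hp))

/-- Null structure of the Ward wave map equation: for a `C²` map `J` on an open set
`U ⊆ ℝ³` with invertible matrix values, pointwise on `U`,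
`J·[∂_t(J⁻¹∂_tJ) − ∂_x(J⁻¹∂_xJ) − ∂_y(J⁻¹∂_yJ) − [J⁻¹∂_tJ, J⁻¹∂_yJ]]
  = □J + J·Q₀(J⁻¹,J) + J·Q₀₂(J⁻¹,J)`,
and consequently `J` solves the Ward wave map equation on `U` iff
`□J + J·Q₀(J⁻¹,J) + J·Q₀₂(J⁻¹,J) = 0` on `U`. -/
theorem ward_null_structure (n : ℕ) (hn : 1 ≤ n) (U : Set (ℝ × ℝ × ℝ)) (hU : IsOpen U)
    (J : ℝ × ℝ × ℝ → Matrix (Fin n) (Fin n) ℂ) (hJ : ContDiffOn ℝ 2 J U)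
    (hJinv : ∀ p ∈ U, IsUnit (J p)) :
    (∀ p ∈ U,
      J p * (dt' (fun q => (J q)⁻¹ * dt' J q) p - dx' (fun q => (J q)⁻¹ * dx' J q) p
          - dy' (fun q => (J q)⁻¹ * dy' J q) p
          - ((J p)⁻¹ * dt' J p * ((J p)⁻¹ * dy' J p)
              - (J p)⁻¹ * dy' J p * ((J p)⁻¹ * dt' J p)))
        = (dt' (dt' J) p - dx' (dx' J) p - dy' (dy' J) p)
          + J p * (dt' (fun q => (J q)⁻¹) p * dt' J p
              - dx' (fun q => (J q)⁻¹) p * dx' J p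
              - dy' (fun q => (J q)⁻¹) p * dy' J p)
          + J p * (dt' (fun q => (J q)⁻¹) p * dy' J p
              - dy' (fun q => (J q)⁻¹) p * dt' J p))
    ∧ ((∀ p ∈ U,
          dt' (fun q => (J q)⁻¹ * dt' J q) p - dx' (fun q => (J q)⁻¹ * dx' J q) p
            - dy' (fun q => (J q)⁻¹ * dy' J q) p
            - ((J p)⁻¹ * dt' J p * ((J p)⁻¹ * dy' J p)
                - (J p)⁻¹ * dy' J p * ((J p)⁻¹ * dt' J p)) = 0)
        ↔ (∀ p ∈ U,
          (dt' (dt' J) p - dx' (dx' J) p - dy' (dy' J) p)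
            + J p * (dt' (fun q => (J q)⁻¹) p * dt' J p
                - dx' (fun q => (J q)⁻¹) p * dx' J p
                - dy' (fun q => (J q)⁻¹) p * dy' J p)
            + J p * (dt' (fun q => (J q)⁻¹) p * dy' J p
                - dy' (fun q => (J q)⁻¹) p * dt' J p) = 0)) :=
  ward_null_structure_general n U hU J hJ hJinv
end

section
/- Elliptic bound for the Q₁₂ symbol: for all nonzero η, ζ ∈ ℝ², writing ξ = η + ζ, one has |η∧ζ| ≤ 2·|ξ|^{1/2}·(|η| + |ζ| − |ξ|)^{1/2}·|η|^{1/2}·|ζ|^{1/2}. Equivalently, |η∧ζ|/(|η||ζ|) ≤ 2·|ξ|^{1/2}(|η|+|ζ|−|ξ|)^{1/2}/(|η|^{1/2}|ζ|^{1/2}). (By the triangle inequality |ξ| ≤ |η| + |ζ|, so the right-hand side is well defined.) -/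
/-!
Lagrange's identity gives `(η∧ζ)² = |η|²|ζ|² − ⟨η,ζ⟩²`, and expanding `|ξ|² = |η|² + 2⟨η,ζ⟩ + |ζ|²`
turns this into Heron's formula `4(η∧ζ)² = ((a+b)² − c²)(c² − (a−b)²)` for the triangle with sides
`a = |η|`, `b = |ζ|`, `c = |ξ|`. The first factor is `(a+b−c)(a+b+c)`, and the remaining cubic
`(a+b+c)(c² − (a−b)²)` is at most `16abc` whenever `a, b, c` satisfy the triangle inequalities.
-/

open RealInnerProductSpace

theorem heron_product_le {a b c : ℝ} (h_sub : |a - b| ≤ c) (h_add : c ≤ a + b) :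
    ((a + b) ^ 2 - c ^ 2) * (c ^ 2 - (a - b) ^ 2) ≤ 16 * c * (a + b - c) * a * b := by
  obtain ⟨h_ba, h_ab⟩ := abs_le.1 h_sub
  -- Ravi substitution: `x, y, z ≥ 0` with `a = (x+z)/2`, `b = (y+z)/2`, `c = (x+y)/2`.
  have hx : 0 ≤ c + a - b := by linarith
  have hy : 0 ≤ c - a + b := by linarith
  have hz : 0 ≤ a + b - c := by linarith
  nlinarith [mul_nonneg (mul_nonneg hx hy) hz, mul_nonneg (mul_nonneg hx hz) hz,
    mul_nonneg (mul_nonneg hy hz) hz, mul_nonneg (mul_nonneg hx hx) hz,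
    mul_nonneg (mul_nonneg hy hy) hz]

section InnerProductSpace

variable {E : Type*} [NormedAddCommGroup E] [InnerProductSpace ℝ E]

theorem four_mul_sq_norm_mul_sq_norm_sub_sq_inner (x y : E) :
    4 * (‖x‖ ^ 2 * ‖y‖ ^ 2 - ⟪x, y⟫ ^ 2) =
      ((‖x‖ + ‖y‖) ^ 2 - ‖x + y‖ ^ 2) * (‖x + y‖ ^ 2 - (‖x‖ - ‖y‖) ^ 2) := by
  rw [norm_add_sq_real]
  ring

theorem sq_norm_mul_sq_norm_sub_sq_inner_le (x y : E) :
    ‖x‖ ^ 2 * ‖y‖ ^ 2 - ⟪x, y⟫ ^ 2 ≤ 4 * ‖x + y‖ * (‖x‖ + ‖y‖ - ‖x + y‖) * ‖x‖ * ‖y‖ := by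
  have h_sub : |‖x‖ - ‖y‖| ≤ ‖x + y‖ := by
    simpa using abs_norm_sub_norm_le x (-y)
  have := heron_product_le h_sub (norm_add_le x y)
  linarith [four_mul_sq_norm_mul_sq_norm_sub_sq_inner x y]

end InnerProductSpace

theorem EuclideanSpace.sq_wedge_eq (η ζ : EuclideanSpace ℝ (Fin 2)) :
    (η 0 * ζ 1 - η 1 * ζ 0) ^ 2 = ‖η‖ ^ 2 * ‖ζ‖ ^ 2 - ⟪η, ζ⟫ ^ 2 := by
  simp only [EuclideanSpace.norm_sq_eq, PiLp.inner_apply, Fin.sum_univ_two, Real.norm_eq_abs,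
    sq_abs, RCLike.inner_apply, conj_trivial]
  ring

theorem EuclideanSpace.abs_wedge_le (η ζ : EuclideanSpace ℝ (Fin 2)) :
    |η 0 * ζ 1 - η 1 * ζ 0| ≤ 2 * √‖η + ζ‖ * √(‖η‖ + ‖ζ‖ - ‖η + ζ‖) * √‖η‖ * √‖ζ‖ := by
  refine abs_le_of_sq_le_sq ?_ (by positivity)
  have h_gap : 0 ≤ ‖η‖ + ‖ζ‖ - ‖η + ζ‖ := sub_nonneg.2 (norm_add_le η ζ)
  simp only [mul_pow, Real.sq_sqrt (norm_nonneg _), Real.sq_sqrt h_gap]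
  rw [sq_wedge_eq]
  linarith [sq_norm_mul_sq_norm_sub_sq_inner_le η ζ]

theorem mul_div_mul_self_eq_div {G₀ : Type*} [GroupWithZero G₀] (a b : G₀) :
    a * b / (b * b) = a / b := by
  rw [mul_div_assoc, div_self_mul_self', div_eq_mul_inv]

theorem Q12_symbol_elliptic_bound_general (η ζ : EuclideanSpace ℝ (Fin 2)) :
    |η 0 * ζ 1 - η 1 * ζ 0|
        ≤ 2 * Real.sqrt ‖η + ζ‖ * Real.sqrt (‖η‖ + ‖ζ‖ - ‖η + ζ‖) *
            Real.sqrt ‖η‖ * Real.sqrt ‖ζ‖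
    ∧ |η 0 * ζ 1 - η 1 * ζ 0| / (‖η‖ * ‖ζ‖)
        ≤ 2 * Real.sqrt ‖η + ζ‖ * Real.sqrt (‖η‖ + ‖ζ‖ - ‖η + ζ‖) /
            (Real.sqrt ‖η‖ * Real.sqrt ‖ζ‖) := by
  have h_wedge := EuclideanSpace.abs_wedge_le η ζ
  refine ⟨h_wedge, ?_⟩
  have h_norms : ‖η‖ * ‖ζ‖ = (√‖η‖ * √‖ζ‖) * (√‖η‖ * √‖ζ‖) := by
    rw [mul_mul_mul_comm, Real.mul_self_sqrt (norm_nonneg _), Real.mul_self_sqrt (norm_nonneg _)]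
  calc |η 0 * ζ 1 - η 1 * ζ 0| / (‖η‖ * ‖ζ‖)
      ≤ 2 * √‖η + ζ‖ * √(‖η‖ + ‖ζ‖ - ‖η + ζ‖) * √‖η‖ * √‖ζ‖ / (‖η‖ * ‖ζ‖) := by gcongr
    _ = 2 * √‖η + ζ‖ * √(‖η‖ + ‖ζ‖ - ‖η + ζ‖) * (√‖η‖ * √‖ζ‖) /
          ((√‖η‖ * √‖ζ‖) * (√‖η‖ * √‖ζ‖)) := by rw [h_norms, mul_assoc _ √‖η‖]
    _ = 2 * √‖η + ζ‖ * √(‖η‖ + ‖ζ‖ - ‖η + ζ‖) / (√‖η‖ * √‖ζ‖) := mul_div_mul_self_eq_div _ _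

/-- Elliptic bound for the `Q₁₂` symbol: for nonzero `η, ζ ∈ ℝ²` and `ξ = η + ζ`,
`|η∧ζ| ≤ 2·|ξ|^{1/2}(|η|+|ζ|−|ξ|)^{1/2}|η|^{1/2}|ζ|^{1/2}`, equivalently
`|η∧ζ|/(|η||ζ|) ≤ 2·|ξ|^{1/2}(|η|+|ζ|−|ξ|)^{1/2}/(|η|^{1/2}|ζ|^{1/2})`. -/
theorem Q12_symbol_elliptic_bound (η ζ : EuclideanSpace ℝ (Fin 2))
    (hη : η ≠ 0) (hζ : ζ ≠ 0) :
    |η 0 * ζ 1 - η 1 * ζ 0|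
        ≤ 2 * Real.sqrt ‖η + ζ‖ * Real.sqrt (‖η‖ + ‖ζ‖ - ‖η + ζ‖) *
            Real.sqrt ‖η‖ * Real.sqrt ‖ζ‖
    ∧ |η 0 * ζ 1 - η 1 * ζ 0| / (‖η‖ * ‖ζ‖)
        ≤ 2 * Real.sqrt ‖η + ζ‖ * Real.sqrt (‖η‖ + ‖ζ‖ - ‖η + ζ‖) /
            (Real.sqrt ‖η‖ * Real.sqrt ‖ζ‖) :=
  Q12_symbol_elliptic_bound_general η ζ
end

section
/- Two-sided elliptic bound for the Q₀ⱼ symbols: for all nonzero η, ζ ∈ ℝ², writing ξ = η + ζ, one has (|η|+|ζ|)^{1/2}·(|η|+|ζ|−|ξ|)^{1/2}·|η|^{1/2}·|ζ|^{1/2} ≤ | |η|ζ − |ζ|η | ≤ √2·(|η|+|ζ|)^{1/2}·(|η|+|ζ|−|ξ|)^{1/2}·|η|^{1/2}·|ζ|^{1/2}, where | |η|ζ − |ζ|η | is the Euclidean norm of the vector |η|ζ − |ζ|η ∈ ℝ². -/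
/-!
Expanding the square, `‖‖x‖ • y - ‖y‖ • x‖² = 2‖x‖‖y‖(‖x‖‖y‖ - ⟪x, y⟫)`, and
`2(‖x‖‖y‖ - ⟪x, y⟫) = (‖x‖ + ‖y‖)² - ‖x + y‖²` factors as a difference of squares.
This gives the symbol exactly as `√(‖x‖ + ‖y‖ + ‖x + y‖)` times the square roots in the bound;
the two-sided estimate is then `‖x‖ + ‖y‖ ≤ ‖x‖ + ‖y‖ + ‖x + y‖ ≤ 2 (‖x‖ + ‖y‖)`.
-/

open Real

section InnerProductSpace

variable {E : Type*} [NormedAddCommGroup E] [InnerProductSpace ℝ E]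

theorem norm_smul_sub_smul_sq (x y : E) :
    ‖‖x‖ • y - ‖y‖ • x‖ ^ 2 =
      (‖x‖ + ‖y‖ + ‖x + y‖) * (‖x‖ + ‖y‖ - ‖x + y‖) * ‖x‖ * ‖y‖ := by
  rw [norm_sub_sq_real, norm_smul, norm_smul, real_inner_smul_left, real_inner_smul_right,
    real_inner_comm, norm_norm, norm_norm]
  linear_combination (‖x‖ * ‖y‖) * norm_add_sq_real x y

theorem norm_smul_sub_smul_eq_sqrt (x y : E) :
    ‖‖x‖ • y - ‖y‖ • x‖ =
      √(‖x‖ + ‖y‖ + ‖x + y‖) * √(‖x‖ + ‖y‖ - ‖x + y‖) * √‖x‖ * √‖y‖ := by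
  have hsum : 0 ≤ ‖x‖ + ‖y‖ + ‖x + y‖ := by positivity
  have hdefect : 0 ≤ ‖x‖ + ‖y‖ - ‖x + y‖ := sub_nonneg.2 (norm_add_le x y)
  rw [← sqrt_mul hsum, ← sqrt_mul (mul_nonneg hsum hdefect),
    ← sqrt_mul (mul_nonneg (mul_nonneg hsum hdefect) (norm_nonneg x)),
    ← norm_smul_sub_smul_sq, sqrt_sq (norm_nonneg _)]

end InnerProductSpace

theorem Q0j_symbol_elliptic_bound_general (η ζ : EuclideanSpace ℝ (Fin 2)) :
    Real.sqrt (‖η‖ + ‖ζ‖) * Real.sqrt (‖η‖ + ‖ζ‖ - ‖η + ζ‖) *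
        Real.sqrt ‖η‖ * Real.sqrt ‖ζ‖
      ≤ ‖‖η‖ • ζ - ‖ζ‖ • η‖
    ∧ ‖‖η‖ • ζ - ‖ζ‖ • η‖
      ≤ Real.sqrt 2 * (Real.sqrt (‖η‖ + ‖ζ‖) * Real.sqrt (‖η‖ + ‖ζ‖ - ‖η + ζ‖) *
          Real.sqrt ‖η‖ * Real.sqrt ‖ζ‖) := by
  have hξ : ‖η + ζ‖ ≤ ‖η‖ + ‖ζ‖ := norm_add_le η ζ
  have hξ0 : 0 ≤ ‖η + ζ‖ := norm_nonneg _
  rw [norm_smul_sub_smul_eq_sqrt]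
  constructor
  · gcongr √?_ * _ * _ * _
    linarith
  · calc _ ≤ √(2 * (‖η‖ + ‖ζ‖)) * √(‖η‖ + ‖ζ‖ - ‖η + ζ‖) * √‖η‖ * √‖ζ‖ := by
          gcongr √?_ * _ * _ * _
          linarith
      _ = _ := by rw [sqrt_mul zero_le_two]; ring

/-- Two-sided elliptic bound for the `Q₀ⱼ` symbols: for nonzero `η, ζ ∈ ℝ²` and
`ξ = η + ζ`,
`(|η|+|ζ|)^{1/2}(|η|+|ζ|−|ξ|)^{1/2}|η|^{1/2}|ζ|^{1/2} ≤ | |η|ζ − |ζ|η |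
  ≤ √2·(|η|+|ζ|)^{1/2}(|η|+|ζ|−|ξ|)^{1/2}|η|^{1/2}|ζ|^{1/2}`. -/
theorem Q0j_symbol_elliptic_bound (η ζ : EuclideanSpace ℝ (Fin 2))
    (hη : η ≠ 0) (hζ : ζ ≠ 0) :
    Real.sqrt (‖η‖ + ‖ζ‖) * Real.sqrt (‖η‖ + ‖ζ‖ - ‖η + ζ‖) *
        Real.sqrt ‖η‖ * Real.sqrt ‖ζ‖
      ≤ ‖‖η‖ • ζ - ‖ζ‖ • η‖
    ∧ ‖‖η‖ • ζ - ‖ζ‖ • η‖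
      ≤ Real.sqrt 2 * (Real.sqrt (‖η‖ + ‖ζ‖) * Real.sqrt (‖η‖ + ‖ζ‖ - ‖η + ζ‖) *
          Real.sqrt ‖η‖ * Real.sqrt ‖ζ‖) :=
  Q0j_symbol_elliptic_bound_general η ζ
end
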